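/- Let k and n be two integers with k even and 4 ≤ k ≤ n, and let M be an edge set of the complete graph K_n with Δ(K_n[M]) = 1 (i.e., M is a matching of K_n). If |M| = k − 1, then κ_k(K_n \ M) ≥ n − k/2 − 1. -/

import Mathlib

open SimpleGraph

variable {V : Type*}

/-- An `S`-Steiner tree in `G`: a subgraph of `G` that is a tree and contains `S`. -/
def IsSteinerTree (G : SimpleGraph V) (S : Set V) (T : G.Subgraph) : Prop :=
  S ⊆ T.verts ∧ T.coe.IsTree

/-- Two Steiner trees are internally disjoint if they share no edges and their
vertex sets intersect exactly in `S`. -/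
def InternallyDisjoint {G : SimpleGraph V} (S : Set V) (T T' : G.Subgraph) : Prop :=
  T.edgeSet ∩ T'.edgeSet = ∅ ∧ T.verts ∩ T'.verts = S

/-- Two Steiner trees are edge-disjoint if they share no edges. -/
def EdgeDisjointTrees {G : SimpleGraph V} (T T' : G.Subgraph) : Prop :=
  T.edgeSet ∩ T'.edgeSet = ∅

/-- `κ(S)`: the maximum number of pairwise internally disjoint `S`-Steiner trees in `G`. -/
noncomputable def steinerConn (G : SimpleGraph V) (S : Set V) : ℕ :=
  sSup {m | ∃ f : Fin m → G.Subgraph, (∀ i, IsSteinerTree G S (f i)) ∧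
    ∀ i j, i ≠ j → InternallyDisjoint S (f i) (f j)}

/-- `λ(S)`: the maximum number of pairwise edge-disjoint `S`-Steiner trees in `G`. -/
noncomputable def steinerEdgeConn (G : SimpleGraph V) (S : Set V) : ℕ :=
  sSup {m | ∃ f : Fin m → G.Subgraph, (∀ i, IsSteinerTree G S (f i)) ∧
    ∀ i j, i ≠ j → EdgeDisjointTrees (f i) (f j)}

/-- The generalized `k`-connectivity `κ_k(G) = min { κ(S) : |S| = k }`. -/
noncomputable def genConn (G : SimpleGraph V) (k : ℕ) : ℕ :=
  sInf {m | ∃ S : Set V, S.ncard = k ∧ steinerConn G S = m}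

/-- The generalized `k`-edge-connectivity `λ_k(G) = min { λ(S) : |S| = k }`. -/
noncomputable def genEdgeConn (G : SimpleGraph V) (k : ℕ) : ℕ :=
  sInf {m | ∃ S : Set V, S.ncard = k ∧ steinerEdgeConn G S = m}

/-- `Δ(K_n[M])`: the maximum number of edges of `M` incident with a single vertex. -/
noncomputable def edgeMaxDeg {n : ℕ} (M : Set (Sym2 (Fin n))) : ℕ :=
  sSup {d | ∃ v : Fin n, d = {e ∈ M | v ∈ e}.ncard}

section Gadget
variable {W : Type*}

lemma acyclic_of_idx (H : SimpleGraph W) (idx : W → ℕ)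
    (hinj : Function.Injective idx)
    (huniq : ∀ x y z, H.Adj x y → H.Adj x z → idx y < idx x → idx z < idx x → y = z) :
    H.IsAcyclic := by
  classical
  intro v c hc
  obtain ⟨x, hxmem, hxmax⟩ : ∃ x ∈ c.support, ∀ u ∈ c.support, idx u ≤ idx x := by
    obtain ⟨x, hx⟩ := (c.support.toFinset.image idx).exists_max_image id
      (by simpa using ⟨v, Walk.start_mem_support c⟩)
    obtain ⟨x0, hx0mem, hx0⟩ := Finset.mem_image.1 hx.1
    refine ⟨x0, List.mem_toFinset.1 hx0mem, fun u hu => ?_⟩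
    have := hx.2 (idx u) (Finset.mem_image.2 ⟨u, List.mem_toFinset.2 hu, rfl⟩)
    simpa [hx0] using this
  have hsub : ∀ u ∈ (c.rotate x hxmem).support, u ∈ c.support := by
    intro u hu
    rw [Walk.support_eq_cons] at hu
    rcases List.mem_cons.1 hu with rfl | hu
    · exact hxmem
    · have := (Walk.support_rotate c x hxmem).mem_iff.1 hu
      rw [Walk.support_eq_cons c]
      exact List.mem_cons_of_mem _ this
  have key : ∀ (d : H.Walk x x), d.IsCycle → (∀ u ∈ d.support, idx u ≤ idx x) → False := by
    intro d hd hmax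
    cases d with
    | nil => exact hd.not_of_nil
    | @cons _ y _ hxy q =>
      have hylt : idx y < idx x := by
        have hy : y ∈ (Walk.cons hxy q).support := by
          simp [Walk.support_cons, Walk.start_mem_support]
        exact lt_of_le_of_ne (hmax y hy) (fun h => hxy.ne' (hinj h))
      cases hrev : q.reverse with
      | nil => exact hxy.ne rfl
      | @cons _ z _ hxz q₂ =>
        have hzmem : z ∈ (Walk.cons hxy q).support := by
          have : z ∈ q.reverse.support := by
            rw [hrev]; simp [Walk.support_cons, Walk.start_mem_support]
          rw [Walk.support_reverse, List.mem_reverse] at this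
          simp [Walk.support_cons, this]
        have hzlt : idx z < idx x :=
          lt_of_le_of_ne (hmax z hzmem) (fun h => hxz.ne' (hinj h))
        have hyz : y = z := huniq x y z hxy hxz hylt hzlt
        subst hyz
        have hq : q = (Walk.cons hxz q₂).reverse := by
          rw [← hrev, Walk.reverse_reverse]
        have hmemedge : s(x, y) ∈ q.edges := by
          rw [hq, Walk.edges_reverse, List.mem_reverse, Walk.edges_cons]
          exact List.mem_cons_self
        have hnodup := hd.edges_nodup
        rw [Walk.edges_cons, List.nodup_cons] at hnodup
        exact hnodup.1 hmemedge
  exact key (c.rotate x hxmem) (hc.rotate hxmem)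
    (fun u hu => hxmax u (hsub u hu))

variable {W : Type*} {G : SimpleGraph W}

/-- Subgraph built from a vertex sequence and a parent function. -/
def mkT (G : SimpleGraph W) (p : ℕ) (seq : ℕ → W) (par : ℕ → ℕ)
    (hpar : ∀ i, 0 < i → i < p → par i < i)
    (hadj : ∀ i, 0 < i → i < p → G.Adj (seq i) (seq (par i))) : G.Subgraph where
  verts := seq '' Set.Iio p
  Adj x y := ∃ i, 0 < i ∧ i < p ∧
    ((x = seq i ∧ y = seq (par i)) ∨ (y = seq i ∧ x = seq (par i)))
  adj_sub := by
    rintro x y ⟨i, hi0, hip, (⟨rfl, rfl⟩ | ⟨rfl, rfl⟩)⟩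
    · exact hadj i hi0 hip
    · exact (hadj i hi0 hip).symm
  edge_vert := by
    rintro x y ⟨i, hi0, hip, (⟨rfl, _⟩ | ⟨_, rfl⟩)⟩
    · exact ⟨i, hip, rfl⟩
    · exact ⟨par i, lt_trans (hpar i hi0 hip) hip, rfl⟩
  symm := by
    constructor
    rintro x y ⟨i, hi0, hip, h⟩
    exact ⟨i, hi0, hip, h.symm⟩

variable {p : ℕ} {seq : ℕ → W} {par : ℕ → ℕ}
  {hpar : ∀ i, 0 < i → i < p → par i < i}
  {hadj : ∀ i, 0 < i → i < p → G.Adj (seq i) (seq (par i))}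

lemma mkT_verts : (mkT G p seq par hpar hadj).verts = seq '' Set.Iio p := rfl

lemma mkT_adj {x y : W} : (mkT G p seq par hpar hadj).Adj x y ↔ ∃ i, 0 < i ∧ i < p ∧
    ((x = seq i ∧ y = seq (par i)) ∨ (y = seq i ∧ x = seq (par i))) := Iff.rfl

lemma mkT_edge {e : Sym2 W} : e ∈ (mkT G p seq par hpar hadj).edgeSet ↔
    ∃ i, 0 < i ∧ i < p ∧ e = s(seq i, seq (par i)) := by
  refine e.ind (fun x y => ?_)
  rw [Subgraph.mem_edgeSet, mkT_adj]
  constructor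
  · rintro ⟨i, hi0, hip, (⟨rfl, rfl⟩ | ⟨rfl, rfl⟩)⟩
    · exact ⟨i, hi0, hip, rfl⟩
    · exact ⟨i, hi0, hip, Sym2.eq_swap⟩
  · rintro ⟨i, hi0, hip, he⟩
    rcases Sym2.eq_iff.1 he with ⟨rfl, rfl⟩ | ⟨rfl, rfl⟩
    · exact ⟨i, hi0, hip, Or.inl ⟨rfl, rfl⟩⟩
    · exact ⟨i, hi0, hip, Or.inr ⟨rfl, rfl⟩⟩

lemma mkT_isTree (hp : 0 < p) (hinj : Set.InjOn seq (Set.Iio p)) :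
    (mkT G p seq par hpar hadj).coe.IsTree := by
  classical
  set T := mkT G p seq par hpar hadj with hT
  have hidx : ∀ i, i < p → Function.invFunOn seq (Set.Iio p) (seq i) = i := by
    intro i hip
    exact hinj (Function.invFunOn_apply_mem (f := seq) hip) hip
      (Function.invFunOn_apply_eq (f := seq) hip)
  set idx : T.verts → ℕ := fun x => Function.invFunOn seq (Set.Iio p) x.val with hidxdef
  have hseqidx : ∀ x : T.verts, seq (idx x) = x.val ∧ idx x < p := by
    rintro ⟨x, i, hip, rfl⟩
    have h := hidx i hip
    constructor
    · show seq (Function.invFunOn seq (Set.Iio p) (seq i)) = seq i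
      rw [h]
    · show Function.invFunOn seq (Set.Iio p) (seq i) < p
      rw [h]; exact hip
  have hidxinj : Function.Injective idx := by
    intro x y hxy
    have hx := hseqidx x; have hy := hseqidx y
    exact Subtype.ext (by rw [← hx.1, ← hy.1, hxy])
  -- the lower neighbor is unique
  have hlow : ∀ (x y : T.verts), T.coe.Adj x y → idx y < idx x →
      (y : W) = seq (par (idx x)) := by
    intro x y hxyadj hlt
    have hadj' : T.Adj x.val y.val := hxyadj
    obtain ⟨i, hi0, hip, hcase⟩ : ∃ i, 0 < i ∧ i < p ∧
        ((x.val = seq i ∧ y.val = seq (par i)) ∨ (y.val = seq i ∧ x.val = seq (par i))) := hadj'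
    rcases hcase with ⟨hx, hy⟩ | ⟨hy, hx⟩
    · have hix : idx x = i := by
        have := hseqidx x
        apply hinj this.2 hip; rw [this.1, hx]
      exact hy.trans (congrArg (fun t => seq (par t)) hix).symm
    · -- x = seq (par i), y = seq i : contradicts idx y < idx x
      exfalso
      have hiy : idx y = i := by
        have := hseqidx y
        apply hinj this.2 hip; rw [this.1, hy]
      have hix : idx x = par i := by
        have := hseqidx x
        apply hinj this.2 (lt_trans (hpar i hi0 hip) hip); rw [this.1, hx]
      have := hpar i hi0 hip
      omega
  constructor
  · -- connected
    have hmem0 : seq 0 ∈ T.verts := ⟨0, hp, rfl⟩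
    have hreach : ∀ i (hip : i < p), T.coe.Reachable ⟨seq i, ⟨i, hip, rfl⟩⟩ ⟨seq 0, hmem0⟩ := by
      intro i
      induction i using Nat.strong_induction_on with
      | _ i ih =>
        intro hip
        rcases Nat.eq_zero_or_pos i with rfl | hi0
        · rfl
        · have hadjT : T.Adj (seq i) (seq (par i)) :=
            ⟨i, hi0, hip, Or.inl ⟨rfl, rfl⟩⟩
          have h1 : T.coe.Adj ⟨seq i, T.edge_vert hadjT⟩ ⟨seq (par i), T.edge_vert hadjT.symm⟩ :=
            hadjT.coe
          exact Reachable.trans h1.reachable (ih (par i) (hpar i hi0 hip)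
            (lt_trans (hpar i hi0 hip) hip))
    haveI : Nonempty T.verts := ⟨⟨seq 0, hmem0⟩⟩
    refine Connected.mk ?_
    rintro ⟨x, i, hip, rfl⟩ ⟨y, j, hjp, rfl⟩
    exact (hreach i hip).trans (hreach j hjp).symm
  · -- acyclic
    refine acyclic_of_idx _ idx hidxinj ?_
    intro x y z hxy hxz hylt hzlt
    exact Subtype.ext (by rw [hlow x y hxy hylt, hlow x z hxz hzlt])

end Gadget

section Count
variable {W : Type*}

lemma subgraph_finite [Finite W] (G : SimpleGraph W) : Finite G.Subgraph := by
  have : Function.Injective (fun T : G.Subgraph => (T.verts, T.Adj)) := by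
    intro T T' h
    rw [Prod.mk.injEq] at h
    exact SimpleGraph.Subgraph.ext h.1 h.2
  exact Finite.of_injective _ this

lemma tree_edge {G : SimpleGraph W} {T : G.Subgraph} (ht : T.coe.IsTree) {x y : W}
    (hx : x ∈ T.verts) (hy : y ∈ T.verts) (hxy : x ≠ y) : T.edgeSet.Nonempty := by
  obtain ⟨wlk⟩ := ht.isConnected.preconnected ⟨x, hx⟩ ⟨y, hy⟩
  have hnn : ¬ wlk.Nil := SimpleGraph.Walk.not_nil_of_ne
    (fun h => hxy (congrArg Subtype.val h))
  have hadj := (wlk.firstDart hnn).adj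
  have : T.Adj x ((wlk.firstDart hnn).snd).val := hadj
  exact ⟨s(x, ((wlk.firstDart hnn).snd).val), SimpleGraph.Subgraph.mem_edgeSet.2 this⟩

lemma steinerConn_ge [Finite W] {G : SimpleGraph W} {S : Set W}
    (hS2 : ∃ x y, x ∈ S ∧ y ∈ S ∧ x ≠ y)
    {m : ℕ} (f : Fin m → G.Subgraph) (h1 : ∀ i, IsSteinerTree G S (f i))
    (h2 : ∀ i j, i ≠ j → InternallyDisjoint S (f i) (f j)) : m ≤ steinerConn G S := by
  haveI := subgraph_finite G
  have hbdd : BddAbove {m | ∃ f : Fin m → G.Subgraph, (∀ i, IsSteinerTree G S (f i)) ∧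
      ∀ i j, i ≠ j → InternallyDisjoint S (f i) (f j)} := by
    refine ⟨Nat.card G.Subgraph, fun m' hm' => ?_⟩
    obtain ⟨g, hg1, hg2⟩ := hm'
    have hginj : Function.Injective g := by
      intro i j hij
      by_contra hne
      obtain ⟨hE, hV⟩ := hg2 i j hne
      rw [hij] at hE
      obtain ⟨x, y, hx, hy, hxy⟩ := hS2
      obtain ⟨e, he⟩ := tree_edge (hg1 j).2 ((hg1 j).1 hx) ((hg1 j).1 hy) hxy
      have : e ∈ (g j).edgeSet ∩ (g j).edgeSet := ⟨he, he⟩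
      rw [hE] at this
      exact this
    calc m' = Nat.card (Fin m') := (Nat.card_eq_fintype_card.trans (Fintype.card_fin m')).symm
    _ ≤ Nat.card G.Subgraph := Nat.card_le_card_of_injective g hginj
  exact le_csSup hbdd ⟨f, h1, h2⟩

lemma enumSet [Nonempty W] {s : Set W} (hs : s.Finite) :
    ∃ f : ℕ → W, Set.InjOn f (Set.Iio s.ncard) ∧ f '' (Set.Iio s.ncard) = s := by
  classical
  have hcard : hs.toFinset.card = s.ncard := (Set.ncard_eq_toFinset_card s hs).symm
  set F := hs.toFinset with hF
  let e := F.equivFin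
  refine ⟨fun i => if h : i < F.card then (e.symm ⟨i, hcard ▸ h⟩ : W) else Classical.arbitrary W,
    ?_, ?_⟩
  · intro i hi j hj hij
    rw [Set.mem_Iio] at hi hj
    rw [← hcard] at hi hj
    dsimp only at hij
    rw [dif_pos hi, dif_pos hj] at hij
    have := e.symm.injective (Subtype.ext hij)
    simpa using this
  · ext x
    simp only [Set.mem_image, Set.mem_Iio]
    constructor
    · rintro ⟨i, hi, rfl⟩
      rw [← hcard] at hi
      try dsimp only
      rw [dif_pos hi]
      exact hs.mem_toFinset.1 (e.symm ⟨i, hcard ▸ hi⟩).2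
    · intro hx
      have hxF : x ∈ hs.toFinset := hs.mem_toFinset.2 hx
      refine ⟨(e ⟨x, hxF⟩).val, hcard ▸ (e ⟨x, hxF⟩).2, ?_⟩
      try dsimp only
      rw [dif_pos (e ⟨x, hxF⟩).2]
      have h2 : e.symm ⟨(e ⟨x, hxF⟩).val, (e ⟨x, hxF⟩).isLt⟩ = ⟨x, hxF⟩ := by
        rw [Fin.eta, Equiv.symm_apply_apply]
      exact congrArg Subtype.val h2

end Count

lemma ncard_Iio (t : ℕ) : (Set.Iio t : Set ℕ).ncard = t := by
  rw [← Finset.coe_Iio, Set.ncard_coe_finset, Nat.card_Iio]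

lemma zmod_cast_inj {k : ℕ} (hk0 : 0 < k) {s t : ℕ} (hs : s < k) (ht : t < k)
    (h : (s : ZMod k) = t) : s = t := by
  haveI : NeZero k := ⟨by omega⟩
  rw [← ZMod.val_cast_of_lt hs, ← ZMod.val_cast_of_lt ht, h]

lemma internallyDisjoint_symm {V : Type*} {G : SimpleGraph V} {S : Set V} {T T' : G.Subgraph}
    (h : InternallyDisjoint S T T') : InternallyDisjoint S T' T :=
  ⟨by rw [Set.inter_comm]; exact h.1, by rw [Set.inter_comm]; exact h.2⟩

section Zig

/-- Walecki zigzag: `0, 1, -1, 2, -2, ...` in `ZMod k`. -/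
def zig (k : ℕ) (i : ℕ) : ZMod k :=
  if Even i then -((i/2 : ℕ) : ZMod k) else ((i/2 + 1 : ℕ) : ZMod k)

variable {k m : ℕ} (hk : k = 2 * m) (hm2 : 2 ≤ m)
include hk hm2

lemma zig_injOn : Set.InjOn (zig k) (Set.Iio k) := by
  haveI : NeZero k := ⟨by omega⟩
  have hval : ∀ t : ℕ, t < k → ((t : ZMod k)).val = t := fun t ht => ZMod.val_cast_of_lt ht
  have hcast : ∀ s t : ℕ, s < k → t < k → ((s : ZMod k) = (t : ZMod k)) → s = t := by
    intro s t hs ht h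
    rw [← hval s hs, ← hval t ht, h]
  have hsum : ∀ s t : ℕ, 0 < s + t → s + t < k → ¬ (-(s : ZMod k) = (t : ZMod k)) := by
    intro s t h0 hlt h
    have : ((s + t : ℕ) : ZMod k) = 0 := by push_cast; rw [← neg_eq_iff_eq_neg.2 h.symm]; ring
    have hdvd := (ZMod.natCast_eq_zero_iff _ _).1 this
    have := Nat.le_of_dvd h0 hdvd
    omega
  intro i hi j hj hij
  simp only [Set.mem_Iio] at hi hj
  unfold zig at hij
  rcases Nat.even_or_odd i with hei | hoi <;> rcases Nat.even_or_odd j with hej | hoj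
  · rw [if_pos hei, if_pos hej, neg_inj] at hij
    have := hcast _ _ (by omega) (by omega) hij
    rw [Nat.even_iff] at hei hej; omega
  · rw [if_pos hei, if_neg (Nat.not_even_iff_odd.2 hoj)] at hij
    exact absurd hij (hsum _ _ (by omega) (by rw [Nat.even_iff] at hei; rw [Nat.odd_iff] at hoj; omega))
  · rw [if_neg (Nat.not_even_iff_odd.2 hoi), if_pos hej] at hij
    exact absurd hij.symm (hsum _ _ (by omega) (by rw [Nat.even_iff] at hej; rw [Nat.odd_iff] at hoi; omega))
  · rw [if_neg (Nat.not_even_iff_odd.2 hoi), if_neg (Nat.not_even_iff_odd.2 hoj)] at hij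
    have := hcast _ _ (by rw [Nat.odd_iff] at hoi; omega) (by rw [Nat.odd_iff] at hoj; omega) hij
    rw [Nat.odd_iff] at hoi hoj; omega

lemma zig_surj : ∀ z : ZMod k, ∃ i, i < k ∧ zig k i = z := by
  classical
  haveI : NeZero k := ⟨by omega⟩
  have hcard : ((Finset.range k).image (zig k)).card = Fintype.card (ZMod k) := by
    rw [Finset.card_image_of_injOn (by
      intro i hi j hj hij
      exact zig_injOn hk hm2 (by simpa using hi) (by simpa using hj) hij)]
    rw [Finset.card_range, ZMod.card]
  intro z
  have : z ∈ (Finset.range k).image (zig k) :=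
    (Finset.eq_univ_of_card _ hcard) ▸ Finset.mem_univ z
  obtain ⟨i, hi, hzi⟩ := Finset.mem_image.1 this
  exact ⟨i, Finset.mem_range.1 hi, hzi⟩

lemma zig_sum (i : ℕ) : zig k i + zig k (i + 1) = if Even i then 1 else 0 := by
  haveI : NeZero k := ⟨by omega⟩
  unfold zig
  rcases Nat.even_or_odd i with he | ho
  · have h1 : ¬ Even (i+1) := by rw [Nat.even_add_one]; exact fun h => h he
    rw [if_pos he, if_neg h1, if_pos he]
    have : (i+1)/2 = i/2 := by rw [Nat.even_iff] at he; omega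
    rw [this]; push_cast; ring
  · have h1 : Even (i+1) := by rw [Nat.even_add_one]; exact Nat.not_even_iff_odd.2 ho
    rw [if_neg (Nat.not_even_iff_odd.2 ho), if_pos h1, if_neg (Nat.not_even_iff_odd.2 ho)]
    have : (i+1)/2 = i/2 + 1 := by rw [Nat.odd_iff] at ho; omega
    rw [this]; push_cast; ring

end Zig

theorem stmt14 (n k : ℕ) (hkeven : Even k) (hk4 : 4 ≤ k) (hkn : k ≤ n)
    (M : Set (Sym2 (Fin n))) (hM : M ⊆ (⊤ : SimpleGraph (Fin n)).edgeSet)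
    (hΔ : edgeMaxDeg M = 1) (hMcard : M.ncard = k - 1) :
    n - k / 2 - 1 ≤ genConn ((⊤ : SimpleGraph (Fin n)).deleteEdges M) k := by
  classical
  obtain ⟨m, hmeq⟩ := hkeven
  have hk : k = 2 * m := by omega
  have hm2 : 2 ≤ m := by omega
  have hn4 : 4 ≤ n := le_trans hk4 hkn
  haveI : NeZero n := ⟨by omega⟩
  set G := (⊤ : SimpleGraph (Fin n)).deleteEdges M with hG
  have hGadj : ∀ x y : Fin n, G.Adj x y ↔ x ≠ y ∧ s(x, y) ∉ M := by
    intro x y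
    rw [hG, SimpleGraph.deleteEdges_adj, SimpleGraph.top_adj]
  have hk2 : k / 2 = m := by omega
  rw [hk2]
  -- the set indexing the infimum is nonempty
  have hex : ∃ S : Set (Fin n), S.ncard = k := by
    refine ⟨Set.range (fun i : Fin k => Fin.castLE hkn i), ?_⟩
    rw [← Set.image_univ, Set.ncard_image_of_injective _ (Fin.castLE_injective hkn),
      Set.ncard_univ, Nat.card_eq_fintype_card, Fintype.card_fin]
  obtain ⟨S₀, hS₀⟩ := hex
  refine le_csInf ⟨steinerConn G S₀, S₀, hS₀, rfl⟩ ?_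
  rintro mm ⟨S, hSk, rfl⟩
  -- basic facts about the matching M
  have hMfin : M.Finite := Set.toFinite M
  have hSfin : S.Finite := Set.toFinite S
  have hnd : ∀ e ∈ M, ¬ e.IsDiag := fun e he =>
    SimpleGraph.not_isDiag_of_mem_edgeSet _ (hM he)
  have hmatch : ∀ e ∈ M, ∀ e' ∈ M, ∀ v : Fin n, v ∈ e → v ∈ e' → e = e' := by
    intro e he e' he' v hv hv'
    by_contra hne
    have hsub : {e, e'} ⊆ {x ∈ M | v ∈ x} := by
      rintro x (rfl | rfl)
      · exact ⟨he, hv⟩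
      · exact ⟨he', hv'⟩
    have h2 : 2 ≤ ({x ∈ M | v ∈ x}).ncard := by
      have hfin : ({x ∈ M | v ∈ x}).Finite := hMfin.subset (fun x hx => hx.1)
      have := Set.ncard_le_ncard hsub hfin
      rwa [Set.ncard_pair hne] at this
    have hle : ({x ∈ M | v ∈ x}).ncard ≤ edgeMaxDeg M := by
      refine le_csSup ⟨M.ncard, ?_⟩ ⟨v, rfl⟩
      rintro d ⟨u, rfl⟩
      exact Set.ncard_le_ncard (fun x hx => hx.1) hMfin
    rw [hΔ] at hle
    omega
  have sym2_rep : ∀ e : Sym2 (Fin n), ∃ x y : Fin n, e = s(x, y) := by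
    intro e
    induction e using Sym2.ind with
    | _ x y => exact ⟨x, y, rfl⟩
  -- split M into edges inside S and edges crossing S
  set A := {e ∈ M | ∀ v ∈ e, v ∈ S} with hAdef
  set B := {e ∈ M | (∃ v ∈ e, v ∈ S) ∧ ¬ (∀ v ∈ e, v ∈ S)} with hBdef
  set a := A.ncard with hadef
  set b := B.ncard with hbdef
  have hAfin : A.Finite := hMfin.subset (fun x hx => hx.1)
  have hBfin : B.Finite := hMfin.subset (fun x hx => hx.1)
  have hbk : b ≤ k - 1 := by
    rw [hbdef, ← hMcard]
    exact Set.ncard_le_ncard (fun x hx => hx.1) hMfin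
  obtain ⟨eA, heAinj, heAimg⟩ := enumSet hAfin
  obtain ⟨eB, heBinj, heBimg⟩ := enumSet hBfin
  rw [← hadef] at heAinj heAimg
  rw [← hbdef] at heBinj heBimg
  -- endpoints of the inside edges
  have hxy : ∀ t : ℕ, ∃ x y : Fin n, t < a →
      eA t = s(x, y) ∧ x ∈ S ∧ y ∈ S ∧ x ≠ y ∧ eA t ∈ M := by
    intro t
    by_cases ht : t < a
    · have hmem : eA t ∈ A := heAimg ▸ ⟨t, ht, rfl⟩
      obtain ⟨x, y, hexy⟩ := sym2_rep (eA t)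
      refine ⟨x, y, fun _ => ⟨hexy, ?_, ?_, ?_, hmem.1⟩⟩
      · exact hmem.2 x (hexy ▸ Sym2.mem_mk_left x y)
      · exact hmem.2 y (hexy ▸ Sym2.mem_mk_right x y)
      · intro hxyeq
        exact hnd _ hmem.1 (by rw [hexy, hxyeq]; exact Sym2.isDiag_iff_proj_eq.2 rfl)
    · exact ⟨0, 0, fun h => absurd h ht⟩
  choose xA yA hAspec using hxy
  -- endpoints of the crossing edges
  have hso : ∀ j : ℕ, ∃ x y : Fin n, j < b →
      eB j = s(x, y) ∧ x ∈ S ∧ y ∉ S ∧ eB j ∈ M := by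
    intro j
    by_cases hj : j < b
    · have hmem : eB j ∈ B := heBimg ▸ ⟨j, hj, rfl⟩
      obtain ⟨x, y, hexy⟩ := sym2_rep (eB j)
      obtain ⟨v, hv, hvS⟩ := hmem.2.1
      have hu : ∃ u ∈ eB j, u ∉ S := by
        by_contra hcon
        push_neg at hcon
        exact hmem.2.2 hcon
      obtain ⟨u, hu, huS⟩ := hu
      have hvu : v ≠ u := fun h => huS (h ▸ hvS)
      have : eB j = s(v, u) := by
        rw [hexy] at hv hu ⊢
        rw [Sym2.mem_iff] at hv hu
        rcases hv with rfl | rfl <;> rcases hu with rfl | rfl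
        · exact absurd rfl hvu
        · rfl
        · exact Sym2.eq_swap
        · exact absurd rfl hvu
      exact ⟨v, u, fun _ => ⟨this, hvS, huS, hmem.1⟩⟩
    · exact ⟨0, 0, fun h => absurd h hj⟩
  choose sB oB hBspec using hso
    -- the core enumeration g : matched vertices then blocked vertices
  set g : ℕ → Fin n := fun i =>
    if i < 2*a then (if Even i then xA (i/2) else yA (i/2)) else sB (i - 2*a) with hgdef
  have hgA : ∀ t, t < a → g (2*t) = xA t ∧ g (2*t+1) = yA t := by
    intro t ht
    constructor
    · rw [hgdef]
      dsimp only
      rw [if_pos (by omega), if_pos ⟨t, by omega⟩]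
      congr 1
      omega
    · rw [hgdef]
      dsimp only
      rw [if_pos (by omega), if_neg (by rw [Nat.even_add_one]; exact fun h => h ⟨t, by omega⟩)]
      congr 1
      omega
  have hgB : ∀ j, j < b → g (2*a + j) = sB j := by
    intro j hj
    rw [hgdef]
    dsimp only
    rw [if_neg (by omega)]
    congr 1
    omega
  have hgS : ∀ i, i < 2*a + b → g i ∈ S := by
    intro i hi
    rw [hgdef]
    dsimp only
    by_cases h2 : i < 2*a
    · rw [if_pos h2]
      have ht : i/2 < a := by omega
      rcases Nat.even_or_odd i with he | ho
      · rw [if_pos he]; exact (hAspec _ ht).2.1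
      · rw [if_neg (Nat.not_even_iff_odd.2 ho)]; exact (hAspec _ ht).2.2.1
    · rw [if_neg h2]
      exact (hBspec _ (by omega)).2.1
  -- each core vertex lies on its designated edge of M
  have hgmem : ∀ i, i < 2*a + b →
      g i ∈ (if i < 2*a then eA (i/2) else eB (i - 2*a)) ∧
        (if i < 2*a then eA (i/2) else eB (i - 2*a)) ∈ M := by
    intro i hi
    by_cases h2 : i < 2*a
    · rw [if_pos h2]
      have ht : i/2 < a := by omega
      obtain ⟨he, hx, hy, hne, hM'⟩ := hAspec _ ht
      rw [hgdef]
      dsimp only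
      rw [if_pos h2]
      rcases Nat.even_or_odd i with hpar | hpar
      · rw [if_pos hpar, he]; exact ⟨Sym2.mem_mk_left _ _, he ▸ hM'⟩
      · rw [if_neg (Nat.not_even_iff_odd.2 hpar), he]; exact ⟨Sym2.mem_mk_right _ _, he ▸ hM'⟩
    · rw [if_neg h2]
      obtain ⟨he, hx, hy, hM'⟩ := hBspec _ (show i - 2*a < b by omega)
      rw [hgdef]
      dsimp only
      rw [if_neg h2, he]
      exact ⟨Sym2.mem_mk_left _ _, he ▸ hM'⟩
  have hABne : ∀ t, t < a → ∀ j, j < b → eA t ≠ eB j := by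
    intro t ht j hj heq
    have hmemA : eA t ∈ A := heAimg ▸ ⟨t, ht, rfl⟩
    obtain ⟨he, hx, hy, hM'⟩ := hBspec _ hj
    have : oB j ∈ S := hmemA.2 (oB j) (by rw [heq, he]; exact Sym2.mem_mk_right _ _)
    exact hy this
  have hginj : Set.InjOn g (Set.Iio (2*a + b)) := by
    intro i hi j hj hij
    rw [Set.mem_Iio] at hi hj
    by_contra hne
    have hEij : (if i < 2*a then eA (i/2) else eB (i - 2*a)) =
        (if j < 2*a then eA (j/2) else eB (j - 2*a)) := by
      refine hmatch _ (hgmem i hi).2 _ (hgmem j hj).2 (g i) (hgmem i hi).1 ?_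
      rw [hij]; exact (hgmem j hj).1
    by_cases h2i : i < 2*a <;> by_cases h2j : j < 2*a
    · rw [if_pos h2i, if_pos h2j] at hEij
      have hdiv : i/2 = j/2 := heAinj (by simp only [Set.mem_Iio]; omega)
        (by simp only [Set.mem_Iio]; omega) hEij
      -- i ≠ j but i/2 = j/2 : one even one odd, so g i = xA t, g j = yA t; contradiction
      have ht : i/2 < a := by omega
      obtain ⟨he, hx, hy, hvne, hM'⟩ := hAspec _ ht
      have hpar : (Even i ∧ ¬ Even j) ∨ (¬ Even i ∧ Even j) := by
        rcases Nat.even_or_odd i with h | h <;> rcases Nat.even_or_odd j with h' | h'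
        · exfalso; apply hne; rw [Nat.even_iff] at h h'; omega
        · exact Or.inl ⟨h, Nat.not_even_iff_odd.2 h'⟩
        · exact Or.inr ⟨Nat.not_even_iff_odd.2 h, h'⟩
        · exfalso; apply hne; rw [Nat.odd_iff] at h h'; omega
      rw [hgdef] at hij
      dsimp only at hij
      rw [if_pos h2i, if_pos h2j, ← hdiv] at hij
      rcases hpar with ⟨hei, hoj⟩ | ⟨hoi, hej⟩
      · rw [if_pos hei, if_neg hoj] at hij; exact hvne hij
      · rw [if_neg hoi, if_pos hej] at hij; exact hvne hij.symm
    · rw [if_pos h2i, if_neg h2j] at hEij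
      exact hABne _ (by omega) _ (by omega) hEij
    · rw [if_neg h2i, if_pos h2j] at hEij
      exact hABne _ (by omega) _ (by omega) hEij.symm
    · rw [if_neg h2i, if_neg h2j] at hEij
      have := heBinj (show i - 2*a ∈ Set.Iio b by simp only [Set.mem_Iio]; omega)
        (show j - 2*a ∈ Set.Iio b by simp only [Set.mem_Iio]; omega) hEij
      omega
  have hab : 2*a + b ≤ k := by
    have himg : g '' (Set.Iio (2*a+b)) ⊆ S := by
      rintro x ⟨i, hi, rfl⟩
      exact hgS i hi
    have hcard := Set.ncard_le_ncard himg hSfin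
    rwa [Set.ncard_image_of_injOn hginj, ncard_Iio, hSk] at hcard
  -- fillers
  set F := S \ (g '' Set.Iio (2*a+b)) with hFdef
  have hFfin : F.Finite := hSfin.subset Set.diff_subset
  have hFcard : F.ncard = k - (2*a+b) := by
    rw [hFdef, Set.ncard_diff (by rintro x ⟨i, hi, rfl⟩; exact hgS i hi) (Set.toFinite _),
      Set.ncard_image_of_injOn hginj, ncard_Iio, hSk]
  obtain ⟨fF, hfFinj, hfFimg⟩ := enumSet hFfin
  rw [hFcard] at hfFinj hfFimg
  -- the full enumeration of S
  set w : ℕ → Fin n := fun i =>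
    if i < 2*a then g i else if i < k - b then fF (i - 2*a) else g (2*a + (i - (k - b))) with hwdef
  have h2ab : 2*a ≤ k - b := by omega
  have hbk1 : 1 ≤ k - b := by omega
  have hw1 : ∀ i, i < 2*a → w i = g i := by
    intro i hi
    rw [hwdef]; dsimp only; rw [if_pos hi]
  have hw2 : ∀ i, 2*a ≤ i → i < k - b → w i = fF (i - 2*a) := by
    intro i hi1 hi2
    rw [hwdef]; dsimp only; rw [if_neg (by omega), if_pos hi2]
  have hw3 : ∀ i, k - b ≤ i → i < k → w i = g (2*a + (i - (k - b))) := by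
    intro i hi1 hi2
    rw [hwdef]; dsimp only; rw [if_neg (by omega), if_neg (by omega)]
  have hwS : ∀ i, i < k → w i ∈ S := by
    intro i hi
    by_cases h1 : i < 2*a
    · rw [hw1 i h1]; exact hgS i (by omega)
    · by_cases h2 : i < k - b
      · rw [hw2 i (by omega) h2]
        have : fF (i - 2*a) ∈ F := hfFimg ▸ ⟨i - 2*a, by simp only [Set.mem_Iio]; omega, rfl⟩
        exact this.1
      · rw [hw3 i (by omega) hi]
        exact hgS _ (by omega)
  have hwinj : Set.InjOn w (Set.Iio k) := by
    have hmemg : ∀ i, i < k → ¬ (i < 2*a) → ¬ (i < k - b) → w i ∈ g '' Set.Iio (2*a+b) := by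
      intro i hi h1 h2
      rw [hw3 i (by omega) hi]
      exact ⟨2*a + (i - (k-b)), by simp only [Set.mem_Iio]; omega, rfl⟩
    have hmemg' : ∀ i, i < k → i < 2*a → w i ∈ g '' Set.Iio (2*a+b) := by
      intro i hi h1
      rw [hw1 i h1]
      exact ⟨i, by simp only [Set.mem_Iio]; omega, rfl⟩
    have hmemF : ∀ i, i < k → 2*a ≤ i → i < k - b → w i ∈ F := by
      intro i hi h1 h2
      rw [hw2 i h1 h2]
      exact hfFimg ▸ ⟨i - 2*a, by simp only [Set.mem_Iio]; omega, rfl⟩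
    intro i hi j hj hij
    rw [Set.mem_Iio] at hi hj
    have hR1 : ∀ x, x < k → (x < 2*a ∨ (¬ x < 2*a ∧ ¬ x < k - b)) → w x ∈ g '' Set.Iio (2*a+b) := by
      rintro x hx (h | ⟨h1, h2⟩)
      · exact hmemg' x hx h
      · exact hmemg x hx h1 h2
    by_cases h1i : i < 2*a <;> by_cases h1j : j < 2*a
    · rw [hw1 i h1i, hw1 j h1j] at hij
      exact hginj (by simp only [Set.mem_Iio]; omega) (by simp only [Set.mem_Iio]; omega) hij
    · by_cases h2j : j < k - b
      · exact absurd (hij ▸ hR1 i hi (Or.inl h1i)) (hmemF j hj (by omega) h2j).2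
      · rw [hw1 i h1i, hw3 j (by omega) hj] at hij
        have := hginj (by simp only [Set.mem_Iio]; omega)
          (by simp only [Set.mem_Iio]; omega) hij
        omega
    · by_cases h2i : i < k - b
      · exact absurd (hij ▸ hmemF i hi (by omega) h2i) (by
          intro hc
          exact hc.2 (hR1 j hj (Or.inl h1j)))
      · rw [hw3 i (by omega) hi, hw1 j h1j] at hij
        have := hginj (by simp only [Set.mem_Iio]; omega)
          (by simp only [Set.mem_Iio]; omega) hij
        omega
    · by_cases h2i : i < k - b <;> by_cases h2j : j < k - b
      · rw [hw2 i (by omega) h2i, hw2 j (by omega) h2j] at hij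
        have := hfFinj (show i - 2*a ∈ Set.Iio (k - (2*a+b)) by simp only [Set.mem_Iio]; omega)
          (show j - 2*a ∈ Set.Iio (k - (2*a+b)) by simp only [Set.mem_Iio]; omega) hij
        omega
      · exact absurd (hij ▸ hmemF i hi (by omega) h2i) (by
          intro hc
          exact hc.2 (hR1 j hj (Or.inr ⟨h1j, h2j⟩)))
      · exact absurd (hij ▸ hR1 i hi (Or.inr ⟨h1i, h2i⟩)) (hmemF j hj (by omega) h2j).2
      · rw [hw3 i (by omega) hi, hw3 j (by omega) hj] at hij
        have := hginj (by simp only [Set.mem_Iio]; omega)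
          (by simp only [Set.mem_Iio]; omega) hij
        omega
  have hwimg : w '' (Set.Iio k) = S := by
    refine Set.eq_of_subset_of_ncard_le ?_ ?_ hSfin
    · rintro x ⟨i, hi, rfl⟩
      exact hwS i hi
    · rw [Set.ncard_image_of_injOn hwinj, ncard_Iio, hSk]
  -- inside edges of M sit on consecutive even positions of w
  have hwA : ∀ t, t < a → w (2*t) = xA t ∧ w (2*t+1) = yA t := by
    intro t ht
    rw [hw1 _ (by omega), hw1 _ (by omega)]
    exact hgA t ht
  have hinsideM : ∀ e ∈ M, (∀ v ∈ e, v ∈ S) →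
      ∃ t, t < a ∧ e = s(w (2*t), w (2*t+1)) := by
    intro e he hall
    have : e ∈ A := ⟨he, hall⟩
    rw [← heAimg] at this
    obtain ⟨t, ht, hte⟩ := this
    rw [Set.mem_Iio] at ht
    obtain ⟨hrep, _, _, _, _⟩ := hAspec t ht
    exact ⟨t, ht, by rw [← hte, hrep, (hwA t ht).1, (hwA t ht).2]⟩
  have hwB : ∀ j, j < b → w ((k-b) + j) = sB j := by
    intro j hj
    rw [hw3 _ (by omega) (by omega)]
    have : 2*a + ((k-b) + j - (k-b)) = 2*a + j := by omega
    rw [this]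
    exact hgB j hj
  have hBM : ∀ j, j < b → s(sB j, oB j) ∈ M := by
    intro j hj
    obtain ⟨he, _, _, hM'⟩ := hBspec j hj
    rwa [he] at hM'
  have hblocked : ∀ i, i < k → ∀ u, u ∉ S → s(w i, u) ∈ M →
      ∃ j, j < b ∧ i = (k-b) + j ∧ u = oB j := by
    intro i hi u huS hM'
    have heB : s(w i, u) ∈ B := by
      refine ⟨hM', ⟨w i, Sym2.mem_mk_left _ _, hwS i hi⟩, ?_⟩
      intro hall
      exact huS (hall u (Sym2.mem_mk_right _ _))
    rw [← heBimg] at heB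
    obtain ⟨j, hj, hje⟩ := heB
    rw [Set.mem_Iio] at hj
    obtain ⟨hrep, hxS, hyS, _⟩ := hBspec j hj
    rw [hje] at hrep
    have hcase := Sym2.eq_iff.1 hrep
    have heq : sB j = w i ∧ oB j = u := by
      rcases hcase with ⟨h1, h2⟩ | ⟨h1, h2⟩
      · exact ⟨h1.symm, h2.symm⟩
      · exfalso; exact huS (by rw [h2]; exact hxS)
    have hwi : w ((k-b) + j) = w i := by rw [hwB j hj, heq.1]
    have : (k-b) + j = i := hwinj (by simp only [Set.mem_Iio]; omega)
      (by simp only [Set.mem_Iio]; omega) hwi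
    exact ⟨j, hj, this.symm, heq.2.symm⟩
  -- =================== type-A trees (stars at outside vertices) ===================
  set seqA : Fin n → ℕ → Fin n := fun v q => if q = 0 then v else w (q-1) with hseqAdef
  set parA : Fin n → ℕ → ℕ :=
    fun v q => if 2 ≤ q ∧ s(v, w (q-1)) ∈ M then q-1 else 0 with hparAdef
  have hseqA0 : ∀ v, seqA v 0 = v := by
    intro v; rw [hseqAdef]; dsimp only; rw [if_pos rfl]
  have hseqA1 : ∀ v q, q ≠ 0 → seqA v q = w (q-1) := by
    intro v q hq; rw [hseqAdef]; dsimp only; rw [if_neg hq]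
  have hparA1 : ∀ v q, (2 ≤ q ∧ s(v, w (q-1)) ∈ M) → parA v q = q - 1 := by
    intro v q hc; rw [hparAdef]; dsimp only; rw [if_pos hc]
  have hparA2 : ∀ v q, ¬ (2 ≤ q ∧ s(v, w (q-1)) ∈ M) → parA v q = 0 := by
    intro v q hc; rw [hparAdef]; dsimp only; rw [if_neg hc]
  have hparA : ∀ v q, 0 < q → q < k+1 → parA v q < q := by
    intro v q hq0 hqk
    by_cases hc : 2 ≤ q ∧ s(v, w (q-1)) ∈ M
    · rw [hparA1 v q hc]; omega
    · rw [hparA2 v q hc]; omega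
  -- if v is outside S and s(v, w i) ∈ M then i is in the blocked band
  have hblocked' : ∀ v, v ∉ S → ∀ i, i < k → s(v, w i) ∈ M → k - b ≤ i ∧ 1 ≤ i := by
    intro v hv i hi hmem
    have hmem' : s(w i, v) ∈ M := by rw [Sym2.eq_swap]; exact hmem
    obtain ⟨j, hj, hij, _⟩ := hblocked i hi v hv hmem'
    omega
  have hadjA : ∀ v, v ∉ S → ∀ q, 0 < q → q < k+1 → G.Adj (seqA v q) (seqA v (parA v q)) := by
    intro v hv q hq0 hqk
    rw [hseqA1 v q (by omega)]
    by_cases hc : 2 ≤ q ∧ s(v, w (q-1)) ∈ M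
    · rw [hparA1 v q hc, hseqA1 v (q-1) (by omega)]
      have hband := hblocked' v hv (q-1) (by omega) hc.2
      have hq2 : q - 1 - 1 = q - 2 := by omega
      rw [hq2]
      rw [hGadj]
      constructor
      · intro heq
        have := hwinj (show q-1 ∈ Set.Iio k by simp only [Set.mem_Iio]; omega)
          (show q-2 ∈ Set.Iio k by simp only [Set.mem_Iio]; omega) heq
        omega
      · intro hmem
        have heq := hmatch _ hmem _ hc.2 (w (q-1)) (Sym2.mem_mk_left _ _)
          (Sym2.mem_mk_right _ _)
        have hvmem : v ∈ s(w (q-1), w (q-2)) := by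
          rw [heq]; exact Sym2.mem_mk_left _ _
        rw [Sym2.mem_iff] at hvmem
        rcases hvmem with h | h
        · exact hv (h ▸ hwS (q-1) (by omega))
        · exact hv (h ▸ hwS (q-2) (by omega))
    · rw [hparA2 v q hc, hseqA0]
      rw [hGadj]
      constructor
      · intro heq
        exact hv (heq ▸ hwS (q-1) (by omega))
      · intro hmem
        have hmem' : s(v, w (q-1)) ∈ M := by rw [Sym2.eq_swap]; exact hmem
        rcases Nat.lt_or_ge q 2 with h2 | h2
        · have := (hblocked' v hv (q-1) (by omega) hmem').1
          omega
        · exact hc ⟨h2, hmem'⟩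
  have hseqAinj : ∀ v, v ∉ S → Set.InjOn (seqA v) (Set.Iio (k+1)) := by
    intro v hv q hq q' hq' heq
    rw [Set.mem_Iio] at hq hq'
    by_cases h0 : q = 0 <;> by_cases h0' : q' = 0
    · rw [h0, h0']
    · rw [h0, hseqA0, hseqA1 v q' h0'] at heq
      exact absurd (heq ▸ hwS (q'-1) (by omega)) hv
    · rw [h0', hseqA0, hseqA1 v q h0] at heq
      exact absurd (heq ▸ hwS (q-1) (by omega)) hv
    · rw [hseqA1 v q h0, hseqA1 v q' h0'] at heq
      have := hwinj (show q-1 ∈ Set.Iio k by simp only [Set.mem_Iio]; omega)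
        (show q'-1 ∈ Set.Iio k by simp only [Set.mem_Iio]; omega) heq
      omega
  set TA : ∀ v : Fin n, v ∉ S → G.Subgraph :=
    fun v hv => mkT G (k+1) (seqA v) (parA v) (hparA v) (hadjA v hv) with hTAdef
  have hvertsA : ∀ v hv, (TA v hv).verts = insert v S := by
    intro v hv
    rw [hTAdef]
    ext x
    simp only [mkT_verts, Set.mem_image, Set.mem_Iio, Set.mem_insert_iff]
    constructor
    · rintro ⟨q, hq, rfl⟩
      by_cases h0 : q = 0
      · left; rw [h0, hseqA0]
      · right; rw [hseqA1 v q h0]; exact hwS (q-1) (by omega)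
    · rintro (rfl | hx)
      · exact ⟨0, by omega, hseqA0 x⟩
      · rw [← hwimg] at hx
        obtain ⟨i, hi, rfl⟩ := hx
        rw [Set.mem_Iio] at hi
        exact ⟨i+1, by omega, by rw [hseqA1 v (i+1) (by omega)]; congr 1⟩
  have hSteinerA : ∀ v hv, IsSteinerTree G S (TA v hv) := by
    intro v hv
    constructor
    · rw [hvertsA v hv]; exact Set.subset_insert v S
    · exact mkT_isTree (by omega) (hseqAinj v hv)
  have hedgeA : ∀ v hv e, e ∈ (TA v hv).edgeSet →
      (∃ i0, i0 < k ∧ e = s(w i0, v) ∧ s(v, w i0) ∉ M) ∨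
      (∃ i0, k - b ≤ i0 ∧ i0 < k ∧ 1 ≤ i0 ∧ e = s(w i0, w (i0-1)) ∧ s(v, w i0) ∈ M) := by
    intro v hv e he
    rw [hTAdef, mkT_edge] at he
    obtain ⟨q, hq0, hqk, he⟩ := he
    rw [hseqA1 v q (by omega)] at he
    by_cases hc : 2 ≤ q ∧ s(v, w (q-1)) ∈ M
    · right
      refine ⟨q-1, ?_, by omega, by omega, ?_, hc.2⟩
      · exact (hblocked' v hv (q-1) (by omega) hc.2).1
      · rw [hparA1 v q hc, hseqA1 v (q-1) (by omega)] at he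
        exact he
    · left
      refine ⟨q-1, by omega, ?_, ?_⟩
      · rw [hparA2 v q hc, hseqA0] at he
        exact he
      · intro hmem
        rcases Nat.lt_or_ge q 2 with h2 | h2
        · have hq1 : q = 1 := by omega
          have := (hblocked' v hv (q-1) (by omega) hmem).2
          omega
        · exact hc ⟨h2, hmem⟩
  -- =================== type-B trees (zigzag Hamiltonian paths of S) ===================
  have hk0 : 0 < k := by omega
  obtain ⟨zag, hzag1, hzag2⟩ : ∃ zag : ZMod k → ℕ,
      (∀ z, zag z < k) ∧ (∀ z, zig k (zag z) = z) := by
    choose zag h1 h2 using zig_surj hk hm2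
    exact ⟨zag, h1, h2⟩
  have hzaginj : Function.Injective zag := by
    intro z z' h
    rw [← hzag2 z, ← hzag2 z', h]
  have hzigzag : ∀ i, i < k → zag (zig k i) = i := by
    intro i hi
    exact zig_injOn hk hm2 (Set.mem_Iio.2 (hzag1 _)) (Set.mem_Iio.2 hi) (hzag2 _)
  set seqB : ℕ → ℕ → Fin n := fun j q => w (zag ((j : ZMod k) + zig k q)) with hseqBdef
  have hseqBinj : ∀ j, Set.InjOn (seqB j) (Set.Iio k) := by
    intro j q hq q' hq' heq
    rw [Set.mem_Iio] at hq hq'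
    rw [hseqBdef] at heq
    dsimp only at heq
    have h1 := hwinj (Set.mem_Iio.2 (hzag1 _)) (Set.mem_Iio.2 (hzag1 _)) heq
    have h2 := hzaginj h1
    have h3 : zig k q = zig k q' := by
      have := congrArg (fun z => z - (j : ZMod k)) h2
      simpa using this
    exact zig_injOn hk hm2 (Set.mem_Iio.2 hq) (Set.mem_Iio.2 hq') h3
  -- the zig-sum of any inside edge of M is 1
  have hMsum : ∀ i1 i2, i1 < k → i2 < k → s(w i1, w i2) ∈ M →
      zig k i1 + zig k i2 = ((1 : ℕ) : ZMod k) := by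
    intro i1 i2 h1 h2 hmem
    obtain ⟨t, ht, hte⟩ := hinsideM _ hmem (by
      intro v hv
      rw [Sym2.mem_iff] at hv
      rcases hv with rfl | rfl
      · exact hwS i1 h1
      · exact hwS i2 h2)
    have h2t : 2*t < k ∧ 2*t+1 < k := by omega
    have hidx : (i1 = 2*t ∧ i2 = 2*t+1) ∨ (i1 = 2*t+1 ∧ i2 = 2*t) := by
      rcases Sym2.eq_iff.1 hte with ⟨ha, hb⟩ | ⟨ha, hb⟩
      · exact Or.inl ⟨hwinj (Set.mem_Iio.2 h1) (Set.mem_Iio.2 h2t.1) ha,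
          hwinj (Set.mem_Iio.2 h2) (Set.mem_Iio.2 h2t.2) hb⟩
      · exact Or.inr ⟨hwinj (Set.mem_Iio.2 h1) (Set.mem_Iio.2 h2t.2) ha,
          hwinj (Set.mem_Iio.2 h2) (Set.mem_Iio.2 h2t.1) hb⟩
    have hsum := zig_sum (m := m) hk hm2 (2*t)
    rw [if_pos ⟨t, by omega⟩] at hsum
    have h1n : ((1 : ℕ) : ZMod k) = (1 : ZMod k) := by push_cast; ring
    rcases hidx with ⟨rfl, rfl⟩ | ⟨rfl, rfl⟩
    · rw [hsum, h1n]
    · rw [add_comm, hsum, h1n]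
  -- zig-sum of consecutive pair i0, i0-1
  have hconsum : ∀ i0, 1 ≤ i0 → i0 < k → ∃ d : ℕ, d ≤ 1 ∧
      zig k i0 + zig k (i0-1) = ((d : ℕ) : ZMod k) := by
    intro i0 h1 h2
    have hsum := zig_sum (m := m) hk hm2 (i0-1)
    have he : i0 - 1 + 1 = i0 := by omega
    rw [he] at hsum
    by_cases hev : Even (i0-1)
    · refine ⟨1, le_refl 1, ?_⟩
      rw [if_pos hev] at hsum
      rw [add_comm, hsum]; push_cast; ring
    · refine ⟨0, by omega, ?_⟩
      rw [if_neg hev] at hsum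
      rw [add_comm, hsum]; push_cast; ring
  -- zig-sum of a type-B edge
  have hBsum : ∀ (j : ℕ) (q : ℕ), 0 < q → q < k → ∃ d : ℕ, d ≤ 1 ∧
      zig k (zag ((j : ZMod k) + zig k q)) + zig k (zag ((j : ZMod k) + zig k (q-1)))
        = ((2*j + d : ℕ) : ZMod k) := by
    intro j q h0 hqk
    have hsum := zig_sum (m := m) hk hm2 (q-1)
    have he : q - 1 + 1 = q := by omega
    rw [he] at hsum
    rw [hzag2, hzag2]
    by_cases hev : Even (q-1)
    · refine ⟨1, le_refl 1, ?_⟩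
      rw [if_pos hev] at hsum
      push_cast
      linear_combination hsum
    · refine ⟨0, by omega, ?_⟩
      rw [if_neg hev] at hsum
      push_cast
      linear_combination hsum
  -- sums determine equality of small naturals
  have hcastinj : ∀ s t : ℕ, s < k → t < k → ((s : ℕ) : ZMod k) = ((t : ℕ) : ZMod k) → s = t :=
    fun s t hs ht h => zmod_cast_inj hk0 hs ht h
  -- edge equality between w-indexed edges transfers zig-sums
  have hwsum : ∀ i1 i2 j1 j2, i1 < k → i2 < k → j1 < k → j2 < k →
      s(w i1, w i2) = s(w j1, w j2) →
      zig k i1 + zig k i2 = zig k j1 + zig k j2 := by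
    intro i1 i2 j1 j2 h1 h2 h3 h4 he
    rcases Sym2.eq_iff.1 he with ⟨ha, hb⟩ | ⟨ha, hb⟩
    · rw [hwinj (Set.mem_Iio.2 h1) (Set.mem_Iio.2 h3) ha,
        hwinj (Set.mem_Iio.2 h2) (Set.mem_Iio.2 h4) hb]
    · rw [hwinj (Set.mem_Iio.2 h1) (Set.mem_Iio.2 h4) ha,
        hwinj (Set.mem_Iio.2 h2) (Set.mem_Iio.2 h3) hb, add_comm]
  have hadjB : ∀ j, 1 ≤ j → j + 1 ≤ m → ∀ q, 0 < q → q < k →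
      G.Adj (seqB j q) (seqB j (q-1)) := by
    intro j hj1 hjm q hq0 hqk
    rw [hseqBdef]
    dsimp only
    rw [hGadj]
    constructor
    · intro heq
      have h1 := hwinj (Set.mem_Iio.2 (hzag1 _)) (Set.mem_Iio.2 (hzag1 _)) heq
      have h2 := hzaginj h1
      have h3 : zig k q = zig k (q-1) := by
        have := congrArg (fun z => z - (j : ZMod k)) h2
        simpa using this
      have := zig_injOn hk hm2 (Set.mem_Iio.2 hqk) (Set.mem_Iio.2 (by omega)) h3
      omega
    · intro hmem
      have hsum1 := hMsum _ _ (hzag1 _) (hzag1 _) hmem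
      obtain ⟨d, hd, hsum2⟩ := hBsum j q hq0 hqk
      rw [hsum2] at hsum1
      have := hcastinj (2*j + d) 1 (by omega) (by omega) hsum1
      omega
  set TB : ∀ j : ℕ, 1 ≤ j → j + 1 ≤ m → G.Subgraph :=
    fun j hj1 hjm => mkT G k (seqB j) (fun q => q - 1)
      (fun q h1 h2 => by omega) (hadjB j hj1 hjm) with hTBdef
  have hvertsB : ∀ j hj1 hjm, (TB j hj1 hjm).verts = S := by
    intro j hj1 hjm
    rw [hTBdef]
    ext x
    simp only [mkT_verts, Set.mem_image, Set.mem_Iio]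
    constructor
    · rintro ⟨q, hq, rfl⟩
      rw [hseqBdef]
      exact hwS _ (hzag1 _)
    · intro hx
      rw [← hwimg] at hx
      obtain ⟨i, hi, rfl⟩ := hx
      rw [Set.mem_Iio] at hi
      refine ⟨zag (zig k i - (j : ZMod k)), hzag1 _, ?_⟩
      rw [hseqBdef]
      dsimp only
      rw [hzag2]
      have : (j : ZMod k) + (zig k i - (j : ZMod k)) = zig k i := by ring
      rw [this, hzigzag i hi]
  have hSteinerB : ∀ j hj1 hjm, IsSteinerTree G S (TB j hj1 hjm) := by
    intro j hj1 hjm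
    constructor
    · rw [hvertsB j hj1 hjm]
    · exact mkT_isTree (by omega) (hseqBinj j)
  have hedgeB : ∀ j hj1 hjm e, e ∈ (TB j hj1 hjm).edgeSet →
      ∃ i1 i2, i1 < k ∧ i2 < k ∧ e = s(w i1, w i2) ∧
        ∃ d : ℕ, d ≤ 1 ∧ zig k i1 + zig k i2 = ((2*j + d : ℕ) : ZMod k) := by
    intro j hj1 hjm e he
    rw [hTBdef, mkT_edge] at he
    obtain ⟨q, hq0, hqk, he⟩ := he
    obtain ⟨d, hd, hsum⟩ := hBsum j q hq0 hqk
    refine ⟨zag ((j : ZMod k) + zig k q), zag ((j : ZMod k) + zig k (q-1)),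
      hzag1 _, hzag1 _, ?_, d, hd, hsum⟩
    rw [he, hseqBdef]
  -- =================== pairwise internal disjointness ===================
  have hdisjAA : ∀ v hv v' hv', v ≠ v' → InternallyDisjoint S (TA v hv) (TA v' hv') := by
    intro v hv v' hv' hne
    constructor
    · rw [Set.eq_empty_iff_forall_notMem]
      rintro e ⟨he1, he2⟩
      rcases hedgeA v hv e he1 with ⟨i0, hi0, hrep, hnm⟩ | ⟨i0, hb0, hi0, h10, hrep, hm0⟩ <;>
        rcases hedgeA v' hv' e he2 with ⟨i1, hi1, hrep', hnm'⟩ | ⟨i1, hb1, hi1, h11, hrep', hm1⟩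
      · have heq := hrep.symm.trans hrep'
        rcases Sym2.eq_iff.1 heq with ⟨ha, hb⟩ | ⟨ha, hb⟩
        · exact hne (by rw [← hb])
        · exact hv' (by rw [← ha]; exact hwS i0 hi0)
      · have heq := hrep.symm.trans hrep'
        rcases Sym2.eq_iff.1 heq with ⟨ha, hb⟩ | ⟨ha, hb⟩
        · exact hv (by rw [hb]; exact hwS (i1-1) (by omega))
        · exact hv (by rw [hb]; exact hwS i1 hi1)
      · have heq := hrep'.symm.trans hrep
        rcases Sym2.eq_iff.1 heq with ⟨ha, hb⟩ | ⟨ha, hb⟩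
        · exact hv' (by rw [hb]; exact hwS (i0-1) (by omega))
        · exact hv' (by rw [hb]; exact hwS i0 hi0)
      · have heq := hrep.symm.trans hrep'
        rcases Sym2.eq_iff.1 heq with ⟨ha, hb⟩ | ⟨ha, hb⟩
        · have hii : i0 = i1 := hwinj (Set.mem_Iio.2 hi0) (Set.mem_Iio.2 hi1) ha
          rw [← hii] at hm1
          have hMeq := hmatch _ hm0 _ hm1 (w i0) (Sym2.mem_mk_right _ _) (Sym2.mem_mk_right _ _)
          rcases Sym2.eq_iff.1 hMeq with ⟨hc, _⟩ | ⟨hc, hdd⟩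
          · exact hne hc
          · exact hv (by rw [hc]; exact hwS i0 hi0)
        · have h1 := hwinj (Set.mem_Iio.2 hi0) (Set.mem_Iio.2 (by omega : i1 - 1 < k)) ha
          have h2 := hwinj (Set.mem_Iio.2 (by omega : i0 - 1 < k)) (Set.mem_Iio.2 hi1) hb
          omega
    · rw [hvertsA v hv, hvertsA v' hv']
      ext x
      simp only [Set.mem_inter_iff, Set.mem_insert_iff]
      constructor
      · rintro ⟨h1 | h1, h2 | h2⟩
        · exact absurd (by rw [← h1, ← h2] : v = v') hne
        · exact absurd (by rw [← h1]; exact h2) hv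
        · exact absurd (by rw [← h2]; exact h1) hv'
        · exact h1
      · intro hx
        exact ⟨Or.inr hx, Or.inr hx⟩
  have hdisjAB : ∀ v hv j hj1 hjm, InternallyDisjoint S (TA v hv) (TB j hj1 hjm) := by
    intro v hv j hj1 hjm
    constructor
    · rw [Set.eq_empty_iff_forall_notMem]
      rintro e ⟨he1, he2⟩
      obtain ⟨i1, i2, hi1, hi2, hrepB, d', hd', hsumB⟩ := hedgeB j hj1 hjm e he2
      rcases hedgeA v hv e he1 with ⟨i0, hi0, hrep, hnm⟩ | ⟨i0, hb0, hi0, h10, hrep, hm0⟩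
      · have heq := hrep.symm.trans hrepB
        rcases Sym2.eq_iff.1 heq with ⟨ha, hb⟩ | ⟨ha, hb⟩
        · exact hv (by rw [hb]; exact hwS i2 hi2)
        · exact hv (by rw [hb]; exact hwS i1 hi1)
      · have heq := hrep.symm.trans hrepB
        obtain ⟨d, hd, hsumA⟩ := hconsum i0 h10 hi0
        have hsums := hwsum i0 (i0-1) i1 i2 hi0 (by omega) hi1 hi2 heq
        rw [hsumA, hsumB] at hsums
        have := hcastinj d (2*j + d') (by omega) (by omega) hsums
        omega
    · rw [hvertsA v hv, hvertsB j hj1 hjm]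
      ext x
      simp only [Set.mem_inter_iff, Set.mem_insert_iff]
      constructor
      · rintro ⟨h1 | h1, h2⟩
        · exact absurd (by rw [← h1]; exact h2) hv
        · exact h1
      · intro hx
        exact ⟨Or.inr hx, hx⟩
  have hdisjBB : ∀ j hj1 hjm j' hj1' hjm', j ≠ j' →
      InternallyDisjoint S (TB j hj1 hjm) (TB j' hj1' hjm') := by
    intro j hj1 hjm j' hj1' hjm' hne
    constructor
    · rw [Set.eq_empty_iff_forall_notMem]
      rintro e ⟨he1, he2⟩
      obtain ⟨i1, i2, hi1, hi2, hrep1, d, hd, hsum1⟩ := hedgeB j hj1 hjm e he1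
      obtain ⟨i1', i2', hi1', hi2', hrep2, d', hd', hsum2⟩ := hedgeB j' hj1' hjm' e he2
      have heq := hrep1.symm.trans hrep2
      have hsums := hwsum i1 i2 i1' i2' hi1 hi2 hi1' hi2' heq
      rw [hsum1, hsum2] at hsums
      have := hcastinj (2*j+d) (2*j'+d') (by omega) (by omega) hsums
      omega
    · rw [hvertsB j hj1 hjm, hvertsB j' hj1' hjm', Set.inter_self]
  -- =================== assembly ===================
  have hOcard : (Sᶜ : Set (Fin n)).ncard = n - k := by
    have h := Set.ncard_add_ncard_compl S (Set.toFinite S)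
    rw [hSk, Nat.card_eq_fintype_card, Fintype.card_fin] at h
    omega
  obtain ⟨fO, hfOinj, hfOimg⟩ := enumSet (Set.toFinite (Sᶜ : Set (Fin n)))
  rw [hOcard] at hfOinj hfOimg
  have hfOout : ∀ i, i < n - k → fO i ∉ S := by
    intro i hi
    have : fO i ∈ (Sᶜ : Set (Fin n)) := hfOimg ▸ ⟨i, Set.mem_Iio.2 hi, rfl⟩
    exact this
  have hS2 : ∃ x y, x ∈ S ∧ y ∈ S ∧ x ≠ y := by
    refine ⟨w 0, w 1, hwS 0 (by omega), hwS 1 (by omega), fun h => ?_⟩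
    have := hwinj (Set.mem_Iio.2 (by omega : (0:ℕ) < k)) (Set.mem_Iio.2 (by omega : (1:ℕ) < k)) h
    omega
  set NN := n - m - 1 with hNN
  set f : Fin NN → G.Subgraph := fun i =>
    if h : (i : ℕ) < n - k then TA (fO i) (hfOout i h)
    else TB ((i : ℕ) - (n - k) + 1) (by omega)
      (by have h2 := i.isLt; omega) with hfdef
  have hf1 : ∀ i, IsSteinerTree G S (f i) := by
    intro i
    rw [hfdef]
    dsimp only
    by_cases h : (i : ℕ) < n - k
    · rw [dif_pos h]; exact hSteinerA _ (hfOout _ h)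
    · rw [dif_neg h]
      exact hSteinerB _ (by omega) (by have h2 := i.isLt; omega)
  have hf2 : ∀ i i', i ≠ i' → InternallyDisjoint S (f i) (f i') := by
    intro i i' hne
    rw [hfdef]
    dsimp only
    by_cases h : (i : ℕ) < n - k <;> by_cases h' : (i' : ℕ) < n - k
    · rw [dif_pos h, dif_pos h']
      refine hdisjAA _ (hfOout _ h) _ (hfOout _ h') ?_
      intro hveq
      have := hfOinj (Set.mem_Iio.2 h) (Set.mem_Iio.2 h') hveq
      exact hne (Fin.ext this)
    · rw [dif_pos h, dif_neg h']
      exact hdisjAB _ (hfOout _ h) _ (by omega) (by have h2 := i'.isLt; omega)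
    · rw [dif_neg h, dif_pos h']
      exact internallyDisjoint_symm
        (hdisjAB _ (hfOout _ h') _ (by omega) (by have h2 := i.isLt; omega))
    · rw [dif_neg h, dif_neg h']
      refine hdisjBB _ (by omega) (by have h2 := i.isLt; omega) _ (by omega)
        (by have h2 := i'.isLt; omega) ?_
      have hii : (i:ℕ) ≠ (i':ℕ) := fun hc => hne (Fin.ext hc)
      omega
  exact steinerConn_ge hS2 f hf1 hf2
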